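/- Let U be a non-principal ultrafilter on ω and consider the ultraproduct ∏_U P_i of the posets P_0, P_1, P_2, .... Then for all m, n with 3 ≤ m, n ≤ ω, the ultraproduct ∏_U P_i is (m,n)-representable. -/

import Mathlib

open Cardinal

universe u

/-- A field of sets: a collection of subsets of `X` closed under finite unions,
finite intersections, and complements. -/
def IsFieldOfSets {X : Type u} (F : Set (Set X)) : Prop :=
  ∅ ∈ F ∧ Set.univ ∈ F ∧ (∀ A ∈ F, ∀ B ∈ F, A ∪ B ∈ F) ∧
    (∀ A ∈ F, ∀ B ∈ F, A ∩ B ∈ F) ∧ (∀ A ∈ F, Aᶜ ∈ F)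

/-- A poset `P` is `(α,β)`-representable if there is a field of sets `F` and an
injective map `h : P → F` preserving all existing meets of sets of cardinality `< α`
and all existing joins of sets of cardinality `< β`. -/
def IsRepresentable (α β : Cardinal.{u}) (P : Type u) [PartialOrder P] : Prop :=
  ∃ (X : Type u) (F : Set (Set X)) (h : P → Set X),
    IsFieldOfSets F ∧ (∀ p : P, h p ∈ F) ∧ Function.Injective h ∧
    (∀ S : Set P, #S < α → ∀ a : P, IsGLB S a → h a = ⋂ s ∈ S, h s) ∧
    (∀ T : Set P, #T < β → ∀ a : P, IsLUB T a → h a = ⋃ t ∈ T, h t)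

/-- The setoid on `∀ i, P i` identifying functions that agree on a set belonging to `U`. -/
def upSetoid {ι : Type u} (U : Ultrafilter ι) (P : ι → Type u) : Setoid (∀ i, P i) where
  r x y := {i | x i = y i} ∈ U
  iseqv := by
    refine ⟨fun x => by
        rw [show {i | x i = x i} = Set.univ by simp]; exact Filter.univ_mem,
      fun {x y} h => ?_, fun {x y z} h1 h2 => ?_⟩
    · exact Filter.mem_of_superset h fun i hi => hi.symm
    · filter_upwards [h1, h2] with i hi1 hi2 using hi1.trans hi2

/-- The ultraproduct of the family `P` of posets over the ultrafilter `U`. -/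
def UProd {ι : Type u} (U : Ultrafilter ι) (P : ι → Type u) : Type u :=
  Quotient (upSetoid U P)

instance uprodPartialOrder {ι : Type u} (U : Ultrafilter ι) (P : ι → Type u)
    [∀ i, PartialOrder (P i)] : PartialOrder (UProd U P) where
  le := Quotient.lift₂ (fun x y => {i | x i ≤ y i} ∈ U) (by
    intro a₁ b₁ a₂ b₂ h₁ h₂
    apply propext
    constructor <;> intro h
    · filter_upwards [h, h₁, h₂] with i hle he1 he2
      rw [← he1, ← he2]; exact hle
    · filter_upwards [h, h₁, h₂] with i hle he1 he2
      rw [he1, he2]; exact hle)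
  le_refl := by
    rintro ⟨x⟩
    show {i | x i ≤ x i} ∈ U
    rw [show {i | x i ≤ x i} = Set.univ by simp]
    exact Filter.univ_mem
  le_trans := by
    rintro ⟨x⟩ ⟨y⟩ ⟨z⟩ h1 h2
    show {i | x i ≤ z i} ∈ U
    filter_upwards [(h1 : {i | x i ≤ y i} ∈ U), (h2 : {i | y i ≤ z i} ∈ U)] with i u1 u2
      using le_trans u1 u2
  le_antisymm := by
    rintro ⟨x⟩ ⟨y⟩ h1 h2
    apply Quotient.sound
    show {i | x i = y i} ∈ U
    filter_upwards [(h1 : {i | x i ≤ y i} ∈ U), (h2 : {i | y i ≤ x i} ∈ U)] with i u1 u2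
      using le_antisymm u1 u2

/-- The levels `N n`: `N 0` has four elements (`a`, `b`, `c`, `d`), and `N (n+1)` has one
element `e_{xy}` for each unordered pair of distinct elements `x`, `y` of `N n`. -/
def N : ℕ → Type
  | 0 => Fin 4
  | n + 1 => { s : Sym2 (N n) // ¬s.IsDiag }

/-- The element `e_{xy}` of `N (n+1)` corresponding to distinct `x y : N n`. -/
def mkE {n : ℕ} (x y : N n) (h : x ≠ y) : N (n + 1) :=
  ⟨s(x, y), by simp [h]⟩

/-- The carrier of the poset `P_k`: the elements `p`, `q`, the elements of `N n` for
`n ≤ k` (constructor `node`), and two elements `x'` (constructor `prime`) and `x''`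
(constructor `dprime`) for every element `x` of `N n` with `n ≤ k`. -/
inductive Elt (k : ℕ) : Type
  | p : Elt k
  | q : Elt k
  | node (n : ℕ) (hn : n ≤ k) (x : N n) : Elt k
  | prime (n : ℕ) (hn : n ≤ k) (x : N n) : Elt k
  | dprime (n : ℕ) (hn : n ≤ k) (x : N n) : Elt k

/-- The order on `P_k`: (1) `x < p` for `x ∈ N₀`; (2) `x < x'` and `x < x''` for
`x ∈ N_n`, `n ≤ k`; (3) `e_{xy} < x', x'', y', y''` for `e_{xy} ∈ N_{n+1}`, `n + 1 ≤ k`;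
(4) `q < x'` and `q < x''` for `x ∈ N_k`; (5) reflexivity; and nothing else. -/
inductive Le (k : ℕ) : Elt k → Elt k → Prop
  | refl (x : Elt k) : Le k x x
  | node_p (h0 : 0 ≤ k) (x : N 0) : Le k (.node 0 h0 x) .p
  | node_prime (n : ℕ) (hn : n ≤ k) (x : N n) : Le k (.node n hn x) (.prime n hn x)
  | node_dprime (n : ℕ) (hn : n ≤ k) (x : N n) : Le k (.node n hn x) (.dprime n hn x)
  | e_prime (n : ℕ) (hn : n + 1 ≤ k) (e : N (n + 1)) (x : N n) (hx : x ∈ e.1) :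
      Le k (.node (n + 1) hn e) (.prime n (Nat.le_of_succ_le hn) x)
  | e_dprime (n : ℕ) (hn : n + 1 ≤ k) (e : N (n + 1)) (x : N n) (hx : x ∈ e.1) :
      Le k (.node (n + 1) hn e) (.dprime n (Nat.le_of_succ_le hn) x)
  | q_prime (x : N k) : Le k .q (.prime k le_rfl x)
  | q_dprime (x : N k) : Le k .q (.dprime k le_rfl x)

lemma Le.eq_of_le_node {k n : ℕ} {x : Elt k} {hn : n ≤ k} {w : N n}
    (h : Le k x (Elt.node n hn w)) : x = Elt.node n hn w := by
  cases h; rfl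

lemma Le.eq_of_le_q {k : ℕ} {x : Elt k} (h : Le k x Elt.q) : x = Elt.q := by
  cases h; rfl

lemma Le.left_cases {k : ℕ} {x y : Elt k} (h : Le k x y) :
    x = y ∨ (∃ n hn w, x = Elt.node n hn w) ∨ x = Elt.q := by
  cases h with
  | refl => exact Or.inl rfl
  | node_p h0 w => exact Or.inr (Or.inl ⟨_, _, _, rfl⟩)
  | node_prime n hn w => exact Or.inr (Or.inl ⟨_, _, _, rfl⟩)
  | node_dprime n hn w => exact Or.inr (Or.inl ⟨_, _, _, rfl⟩)
  | e_prime n hn e w hw => exact Or.inr (Or.inl ⟨_, _, _, rfl⟩)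
  | e_dprime n hn e w hw => exact Or.inr (Or.inl ⟨_, _, _, rfl⟩)
  | q_prime w => exact Or.inr (Or.inr rfl)
  | q_dprime w => exact Or.inr (Or.inr rfl)

/-- `P_k` as a partial order, with order relation `Le k`. -/
instance EltPartialOrder (k : ℕ) : PartialOrder (Elt k) where
  le := Le k
  le_refl := Le.refl
  le_trans := by
    intro x y z h1 h2
    rcases h2.left_cases with rfl | ⟨n, hn, w, rfl⟩ | rfl
    · exact h1
    · rw [h1.eq_of_le_node]; exact h2
    · rw [h1.eq_of_le_q]; exact h2
  le_antisymm := by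
    intro x y h1 h2
    rcases h1.left_cases with rfl | ⟨n, hn, w, rfl⟩ | rfl
    · rfl
    · exact (h2.eq_of_le_node).symm
    · exact (h2.eq_of_le_q).symm


/-!
Call the elements of `N₀` reached from `w ∈ N_n` by repeatedly taking components the atoms
of `w`. For `g : ℕ → N₀`, the classes of standard level (bounded along `U`) whose atoms avoid
`g i` form an up-set of `∏_U P_i` that is closed under all existing meets and prime for all
existing joins. The meet `e_{xy}` of `x'` and `y'` has just the atoms of `x` and `y`, one level
higher; what fails in `P_k` is the meet `q` of `x'` and `y'` for `x, y ∈ N_k`, and in the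
ultraproduct that only happens at non-standard levels because `U` is non-principal. The only
non-trivial join is `p̄`, as a join of classes in `N₀`, so the principal filter of any element
not below `p̄` is closed and prime as well. Filters of these two kinds separate points, and
sending each element to the set of such filters containing it is a complete representation.
-/

section CompletePrimeFilter

variable {P : Type*} [PartialOrder P]

structure IsCompletePrimeFilter (F : Set P) : Prop where
  isUpperSet : IsUpperSet F
  isGLB_mem : ∀ ⦃S : Set P⦄ ⦃a : P⦄, S ⊆ F → IsGLB S a → a ∈ F
  exists_mem_of_isLUB : ∀ ⦃T : Set P⦄ ⦃a : P⦄, IsLUB T a → a ∈ F → ∃ t ∈ T, t ∈ F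

theorem isCompletePrimeFilter_Ici {a : P}
    (ha : ∀ ⦃T : Set P⦄ ⦃c : P⦄, IsLUB T c → a ≤ c → ∃ t ∈ T, a ≤ t) :
    IsCompletePrimeFilter (Set.Ici a) :=
  ⟨isUpperSet_Ici a, fun _ _ hS h => h.2 fun _ hs => hS hs, ha⟩

end CompletePrimeFilter

theorem isFieldOfSets_univ {X : Type u} : IsFieldOfSets (Set.univ : Set (Set X)) := by
  simp [IsFieldOfSets]

theorem isRepresentable_of_separating {P : Type u} [PartialOrder P] (α β : Cardinal.{u})
    (hsep : ∀ a b : P, ¬ a ≤ b → ∃ F : Set P, IsCompletePrimeFilter F ∧ a ∈ F ∧ b ∉ F) :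
    IsRepresentable α β P := by
  let X := {F : Set P // IsCompletePrimeFilter F}
  let h : P → Set X := fun a => {F | a ∈ F.1}
  have hle : ∀ a b, h a ⊆ h b → a ≤ b := fun a b hab => by
    by_contra hn
    obtain ⟨F, hF, ha, hb⟩ := hsep a b hn
    exact hb (hab (show ⟨F, hF⟩ ∈ h a from ha))
  refine ⟨X, Set.univ, h, isFieldOfSets_univ, fun _ => trivial,
    fun a b hab => le_antisymm (hle a b hab.le) (hle b a hab.ge), ?_, ?_⟩
  · intro S _ a ha
    ext F
    simp only [h, Set.mem_ofPred_eq, Set.mem_iInter]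
    exact ⟨fun haF s hs => F.2.isUpperSet (ha.1 hs) haF, fun hS => F.2.isGLB_mem hS ha⟩
  · intro T _ a ha
    ext F
    simp only [h, Set.mem_ofPred_eq, Set.mem_iUnion, exists_prop]
    exact ⟨F.2.exists_mem_of_isLUB ha, fun ⟨t, ht, htF⟩ => F.2.isUpperSet (ha.1 ht) htF⟩

namespace UProd

variable {ι : Type u} {U : Ultrafilter ι} {P : ι → Type u}

def mk (U : Ultrafilter ι) (x : ∀ i, P i) : UProd U P := Quotient.mk (upSetoid U P) x

theorem exists_mk (a : UProd U P) : ∃ x, mk U x = a := Quotient.exists_rep a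

theorem mk_eq_mk {x y : ∀ i, P i} : mk U x = mk U y ↔ ∀ᶠ i in U, x i = y i :=
  Quotient.eq

variable [∀ i, PartialOrder (P i)]

theorem mk_le_mk {x y : ∀ i, P i} : mk U x ≤ mk U y ↔ ∀ᶠ i in U, x i ≤ y i := Iff.rfl

theorem mk_lt_mk {x y : ∀ i, P i} : mk U x < mk U y ↔ ∀ᶠ i in U, x i < y i := by
  simp only [lt_iff_le_not_ge, mk_le_mk, Filter.eventually_and, ← Ultrafilter.eventually_not]

instance [∀ i, NoTopOrder (P i)] [∀ i, Nonempty (P i)] : NoTopOrder (UProd U P) where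
  exists_not_le a := by
    obtain ⟨x, rfl⟩ := exists_mk a
    obtain ⟨y, hy⟩ := Filter.skolem.1 (Filter.Eventually.of_forall fun i => exists_not_le (x i))
    exact ⟨mk U y, fun h => (hy.and (mk_le_mk.1 h)).exists.elim fun _ h => h.1 h.2⟩

instance [∀ i, NoBotOrder (P i)] [∀ i, Nonempty (P i)] : NoBotOrder (UProd U P) where
  exists_not_ge a := by
    obtain ⟨x, rfl⟩ := exists_mk a
    obtain ⟨y, hy⟩ := Filter.skolem.1 (Filter.Eventually.of_forall fun i => exists_not_ge (x i))
    exact ⟨mk U y, fun h => (hy.and (mk_le_mk.1 h)).exists.elim fun _ h => h.1 h.2⟩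

end UProd

theorem Ultrafilter.eventually_gt_of_forall_ne_pure {U : Ultrafilter ℕ} (hU : ∀ i, U ≠ pure i)
    (n : ℕ) : ∀ᶠ i in U, n < i := by
  have hcof := U.le_cofinite_or_eq_pure.resolve_right fun ⟨i, hi⟩ => hU i hi
  exact hcof (Nat.cofinite_eq_atTop ▸ Filter.eventually_gt_atTop n)

namespace N

def atoms : (n : ℕ) → N n → Set (Fin 4)
  | 0, w => {w}
  | n + 1, e => {c | ∃ x ∈ e.1, c ∈ atoms n x}

theorem atoms_subset_of_mem {n : ℕ} {e : N (n + 1)} {x : N n} (hx : x ∈ e.1) :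
    atoms n x ⊆ atoms (n + 1) e :=
  fun _ hc => ⟨x, hx, hc⟩

theorem atoms_subset_union {n : ℕ} {e : N (n + 1)} {x y : N n} (hx : x ∈ e.1) (hy : y ∈ e.1)
    (hxy : x ≠ y) : atoms (n + 1) e ⊆ atoms n x ∪ atoms n y := by
  rintro c ⟨u, hu, hc⟩
  have he : e.1 = s(x, y) := (Sym2.mem_and_mem_iff hxy).1 ⟨hx, hy⟩
  rcases Sym2.mem_iff.1 (he ▸ hu) with rfl | rfl
  exacts [Or.inl hc, Or.inr hc]

theorem exists_mem_atoms_ne (c : Fin 4) :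
    ∀ {n : ℕ} (e : N (n + 1)), ∃ a ∈ atoms (n + 1) e, a ≠ c
  | 0, ⟨e, he⟩ => by
    induction e using Sym2.ind with | h x y => ?_
    have hxy : x ≠ y := by simpa using he
    by_cases hx : x = c
    · exact ⟨y, ⟨y, Sym2.mem_mk_right x y, rfl⟩, hx ▸ hxy.symm⟩
    · exact ⟨x, ⟨x, Sym2.mem_mk_left x y, rfl⟩, hx⟩
  | n + 1, ⟨e, _⟩ => by
    induction e using Sym2.ind with | h x y => ?_
    obtain ⟨a, ha, hac⟩ := exists_mem_atoms_ne c x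
    exact ⟨a, ⟨x, Sym2.mem_mk_left x y, ha⟩, hac⟩

theorem atoms_nonempty : ∀ {n : ℕ} (w : N n), (atoms n w).Nonempty
  | 0, w => ⟨w, rfl⟩
  | _ + 1, e => let ⟨a, ha, _⟩ := exists_mem_atoms_ne 0 e; ⟨a, ha⟩

end N

namespace Elt

variable {k : ℕ}

instance : Inhabited (Elt k) := ⟨.p⟩

/-- `q` gets every atom and level `k`, the top level of `P_k`: this makes both `atoms` and
`level` antitone. -/
def atoms : Elt k → Set (Fin 4)
  | .p => ∅
  | .q => Set.univ
  | .node n _ w => N.atoms n w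
  | .prime n _ w => N.atoms n w
  | .dprime n _ w => N.atoms n w

def level : Elt k → ℕ
  | .p => 0
  | .q => k
  | .node n _ _ => n
  | .prime n _ _ => n
  | .dprime n _ _ => n

def twin : Elt k → Elt k
  | .prime n hn w => .dprime n hn w
  | .dprime n hn w => .prime n hn w
  | x => x

instance : NoTopOrder (Elt k) where
  exists_not_le a := by
    by_cases ha : .prime 0 k.zero_le (0 : Fin 4) ≤ a
    · refine ⟨.dprime 0 k.zero_le (0 : Fin 4), fun h => ?_⟩
      cases ha; cases h
    · exact ⟨_, ha⟩

instance : NoBotOrder (Elt k) where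
  exists_not_ge a := by
    by_cases ha : a ≤ .q
    · refine ⟨.node 0 k.zero_le (0 : Fin 4), fun h => ?_⟩
      cases ha; cases h
    · exact ⟨_, ha⟩

theorem atoms_anti {x y : Elt k} (h : x ≤ y) : y.atoms ⊆ x.atoms := by
  cases h with
  | refl => exact le_rfl
  | node_p => exact Set.empty_subset _
  | node_prime | node_dprime => exact le_rfl
  | e_prime _ _ _ _ hx | e_dprime _ _ _ _ hx => exact N.atoms_subset_of_mem hx
  | q_prime | q_dprime => exact Set.subset_univ _

theorem level_anti {x y : Elt k} (h : x ≤ y) : y.level ≤ x.level := by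
  cases h <;> simp [level]

theorem level_le_level_add_one {x y : Elt k} (h : x ≤ y) : x.level ≤ y.level + 1 := by
  cases h <;> simp [level]

theorem le_twin_of_lt {x y : Elt k} (h : x < y) : x ≤ y.twin := by
  obtain ⟨hle, hne⟩ := h
  cases hle with
  | refl => exact absurd (Le.refl _) hne
  | node_p => exact Le.node_p _ _
  | node_prime => exact Le.node_dprime _ _ _
  | node_dprime => exact Le.node_prime _ _ _
  | e_prime _ _ _ _ hx => exact Le.e_dprime _ _ _ _ hx
  | e_dprime _ _ _ _ hx => exact Le.e_prime _ _ _ _ hx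
  | q_prime => exact Le.q_dprime _
  | q_dprime => exact Le.q_prime _

theorem eq_p_of_lt_of_le_twin {x z : Elt k} (h : x < z) (hz : z ≤ z.twin) : z = .p := by
  cases z with
  | p => rfl
  | q => exact absurd (Le.eq_of_le_q h.1 ▸ le_rfl) h.not_ge
  | node => exact absurd (Le.eq_of_le_node h.1 ▸ le_rfl) h.not_ge
  | prime | dprime => cases hz

theorem exists_eq_node_of_lt_p {x : Elt k} (h : x < .p) :
    ∃ f : Fin 4, x = .node 0 k.zero_le f := by
  obtain ⟨hle, hne⟩ := h
  cases hle with
  | refl => exact absurd (Le.refl _) hne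
  | node_p _ f => exact ⟨f, rfl⟩

theorem exists_mem_atoms_not_mem {a b : Elt k} (ha : a ≤ .p) (hab : ¬ a ≤ b) :
    ∃ c ∈ b.atoms, c ∉ a.atoms := by
  cases ha with
  | refl =>
    cases b with
    | p => exact absurd le_rfl hab
    | q => exact ⟨0, trivial, id⟩
    | node n _ w | prime n _ w | dprime n _ w =>
      obtain ⟨c, hc⟩ := N.atoms_nonempty w
      exact ⟨c, hc, id⟩
  | node_p _ f =>
    have hne : ∀ {c : Fin 4}, c ≠ f → c ∉ atoms (.node 0 k.zero_le f) := fun h h' => h h'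
    cases b with
    | p => exact absurd (Le.node_p _ _) hab
    | q =>
      obtain ⟨c, hc⟩ := exists_ne (α := Fin 4) f
      exact ⟨c, trivial, hne hc⟩
    | node n _ w | prime n _ w | dprime n _ w =>
      cases n with
      | zero =>
        refine ⟨w, rfl, hne fun hw => hab ?_⟩
        subst hw
        first | exact Le.refl _ | exact Le.node_prime _ _ _ | exact Le.node_dprime _ _ _
      | succ n =>
        obtain ⟨c, hc, hcf⟩ := N.exists_mem_atoms_ne f w
        exact ⟨c, hc, hne hcf⟩

/-- `b` is `p` if `z ∈ N₀` and otherwise the component of `z` below `y₀`; every `y > z` not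
above `b` has, together with `y₀`, all the atoms of `z`. -/
theorem exists_lowerBound_of_not_atoms_subset {z y₀ : Elt k} (h : z < y₀) (hlev : y₀.level < k)
    (hat : ¬ z.atoms ⊆ y₀.atoms) :
    ∃ b, ¬ b ≤ z ∧ ∀ y, z < y → ¬ z.atoms ⊆ y₀.atoms ∪ y.atoms → b ≤ y := by
  obtain ⟨hle, hne⟩ := h
  cases hle with
  | refl => exact absurd (Le.refl _) hne
  | node_p =>
    refine ⟨.p, fun hb => ?_, fun y hy' hy => ?_⟩
    · cases hb
    obtain ⟨hle, hne⟩ := hy'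
    cases hle with
    | refl => exact absurd (Le.refl _) hne
    | node_p => exact le_rfl
    | node_prime | node_dprime => exact absurd Set.subset_union_right hy
  | node_prime | node_dprime => exact absurd le_rfl hat
  | e_prime n hn e x hx | e_dprime n hn e x hx =>
    refine ⟨.node n (Nat.le_of_succ_le hn) x, fun hb => ?_, fun y hy' hy => ?_⟩
    · have := congrArg level (Le.eq_of_le_node hb)
      simp [level] at this
    obtain ⟨hle, hne⟩ := hy'
    cases hle with
    | refl => exact absurd (Le.refl _) hne
    | node_prime | node_dprime => exact absurd Set.subset_union_right hy
    | e_prime _ _ _ u hu | e_dprime _ _ _ u hu =>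
      by_cases hux : u = x
      · subst hux
        first | exact Le.node_prime _ _ _ | exact Le.node_dprime _ _ _
      · exact absurd (N.atoms_subset_union hx hu (Ne.symm hux)) hy
  | q_prime | q_dprime => exact absurd hlev (lt_irrefl _)

end Elt

section Ultraproduct

open UProd

variable {U : Ultrafilter ℕ}

def pbar (U : Ultrafilter ℕ) : UProd U Elt := mk U fun _ => .p

def node0 (f : ℕ → Fin 4) : ∀ i, Elt i := fun i => .node 0 i.zero_le (f i)

theorem eq_pbar_of_isLUB_of_notMem {T : Set (UProd U Elt)} {c : UProd U Elt} (h : IsLUB T c)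
    (hc : c ∉ T) :
    c = pbar U ∧ ∃ f₁ f₂ : ℕ → Fin 4,
      mk U (node0 f₁) ∈ T ∧ mk U (node0 f₂) ∈ T ∧ ∀ᶠ i in U, f₁ i ≠ f₂ i := by
  have hlt : ∀ t ∈ T, t < c := fun t ht => (h.1 ht).lt_of_ne (ne_of_mem_of_not_mem ht hc)
  obtain ⟨t₁, ht₁⟩ : T.Nonempty :=
    Set.nonempty_iff_ne_empty.2 fun hT => not_isBot c (isLUB_empty_iff.1 (hT ▸ h))
  obtain ⟨z, rfl⟩ := exists_mk c
  obtain ⟨x₁, rfl⟩ := exists_mk t₁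
  have htwin : mk U z ≤ mk U fun i => (z i).twin := h.2 fun t ht => by
    obtain ⟨x, rfl⟩ := exists_mk t
    exact (mk_lt_mk.1 (hlt _ ht)).mono fun i => Elt.le_twin_of_lt
  have hz : ∀ᶠ i in U, z i = .p := by
    filter_upwards [mk_lt_mk.1 (hlt _ ht₁), mk_le_mk.1 htwin] with i h₁ h₂
    exact Elt.eq_p_of_lt_of_le_twin h₁ h₂
  have hnode : ∀ t ∈ T, ∃ f, t = mk U (node0 f) := fun t ht => by
    obtain ⟨x, rfl⟩ := exists_mk t
    have hx : ∀ᶠ i in U, ∃ f : Fin 4, x i = .node 0 i.zero_le f := by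
      filter_upwards [mk_lt_mk.1 (hlt _ ht), hz] with i hi hzi
      exact Elt.exists_eq_node_of_lt_p (hzi ▸ hi)
    obtain ⟨f, hf⟩ := Filter.skolem.1 hx
    exact ⟨f, mk_eq_mk.2 hf⟩
  obtain ⟨t₂, ht₂, hne⟩ : ∃ t₂ ∈ T, t₂ ≠ mk U x₁ := by
    by_contra! hT
    exact hc (le_antisymm (h.2 fun t ht => (hT t ht).le) (h.1 ht₁) ▸ ht₁)
  obtain ⟨f₁, hf₁⟩ := hnode _ ht₁
  obtain ⟨f₂, rfl⟩ := hnode _ ht₂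
  rw [hf₁, Ne, mk_eq_mk, ← Ultrafilter.eventually_not] at hne
  exact ⟨mk_eq_mk.2 hz, f₁, f₂, hf₁ ▸ ht₁, ht₂, hne.mono fun i h h' => h (by simp [node0, h'])⟩

def avoidFilter (U : Ultrafilter ℕ) (g : ℕ → Fin 4) : Set (UProd U Elt) :=
  {a | ∃ x n, mk U x = a ∧ ∀ᶠ i in U, (x i).level ≤ n ∧ g i ∉ (x i).atoms}

theorem mk_mem_avoidFilter {g : ℕ → Fin 4} {x : ∀ i, Elt i} :
    mk U x ∈ avoidFilter U g ↔ ∃ n, ∀ᶠ i in U, (x i).level ≤ n ∧ g i ∉ (x i).atoms := by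
  refine ⟨fun ⟨y, n, hy, h⟩ => ⟨n, ?_⟩, fun ⟨n, h⟩ => ⟨x, n, rfl, h⟩⟩
  filter_upwards [mk_eq_mk.1 hy, h] with i hi h
  exact hi ▸ h

theorem isUpperSet_avoidFilter (g : ℕ → Fin 4) : IsUpperSet (avoidFilter U g) := by
  rintro a b hab ⟨x, n, rfl, h⟩
  obtain ⟨y, rfl⟩ := exists_mk b
  refine mk_mem_avoidFilter.2 ⟨n, ?_⟩
  filter_upwards [h, mk_le_mk.1 hab] with i ⟨hl, ha⟩ hi
  exact ⟨(Elt.level_anti hi).trans hl, fun h' => ha (Elt.atoms_anti hi h')⟩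

theorem exists_mem_avoidFilter_of_isLUB (g : ℕ → Fin 4) {T : Set (UProd U Elt)}
    {c : UProd U Elt} (h : IsLUB T c) (hc : c ∈ avoidFilter U g) :
    ∃ t ∈ T, t ∈ avoidFilter U g := by
  by_cases hcT : c ∈ T
  · exact ⟨c, hcT, hc⟩
  obtain ⟨-, f₁, f₂, h₁, h₂, hne⟩ := eq_pbar_of_isLUB_of_notMem h hcT
  have hmem : ∀ f : ℕ → Fin 4, (∀ᶠ i in U, g i ≠ f i) → mk U (node0 f) ∈ avoidFilter U g :=
    fun f hf => mk_mem_avoidFilter.2 ⟨0, hf.mono fun i h => ⟨le_rfl, h⟩⟩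
  have hor : ∀ᶠ i in U, g i ≠ f₁ i ∨ g i ≠ f₂ i :=
    hne.mono fun i h => not_and_or.1 fun h' => h (h'.1.symm.trans h'.2)
  rcases Ultrafilter.eventually_or.1 hor with h | h
  exacts [⟨_, h₁, hmem f₁ h⟩, ⟨_, h₂, hmem f₂ h⟩]

theorem exists_atoms_subset_union {S : Set (UProd U Elt)} {z y₀ : ∀ i, Elt i}
    (h : IsGLB S (mk U z)) (hz : mk U z ∉ S) (hy₀ : mk U y₀ ∈ S)
    (hlev : ∀ᶠ i in U, (y₀ i).level < i) :
    ∃ y, mk U y ∈ S ∧ ∀ᶠ i in U, (z i).atoms ⊆ (y₀ i).atoms ∪ (y i).atoms := by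
  have hlt : ∀ y, mk U y ∈ S → ∀ᶠ i in U, z i < y i := fun y hy =>
    mk_lt_mk.1 ((h.1 hy).lt_of_ne (ne_of_mem_of_not_mem hy hz).symm)
  by_contra! hS
  have hb : ∀ᶠ i in U, ∃ b, ¬ b ≤ z i ∧
      ∀ y, z i < y → ¬ (z i).atoms ⊆ (y₀ i).atoms ∪ y.atoms → b ≤ y := by
    filter_upwards [hlt y₀ hy₀, hlev, hS y₀ hy₀] with i hi hl ha
    exact Elt.exists_lowerBound_of_not_atoms_subset hi hl (by rwa [Set.union_self] at ha)
  obtain ⟨b, hb⟩ := Filter.skolem.1 hb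
  have hlb : mk U b ∈ lowerBounds S := fun s hs => by
    obtain ⟨y, rfl⟩ := exists_mk s
    filter_upwards [hb, hlt y hs, hS y hs] with i hb hl ha using hb.2 _ hl ha
  exact (hb.and (mk_le_mk.1 (h.2 hlb))).exists.elim fun _ h => h.1.1 h.2

theorem isGLB_mem_avoidFilter (hU : ∀ i, U ≠ pure i) (g : ℕ → Fin 4) {S : Set (UProd U Elt)}
    {a : UProd U Elt} (hS : S ⊆ avoidFilter U g) (h : IsGLB S a) : a ∈ avoidFilter U g := by
  by_cases haS : a ∈ S
  · exact hS haS
  obtain ⟨s₀, hs₀⟩ : S.Nonempty :=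
    Set.nonempty_iff_ne_empty.2 fun hS => not_isTop a (isGLB_empty_iff.1 (hS ▸ h))
  obtain ⟨z, rfl⟩ := exists_mk a
  obtain ⟨y₀, rfl⟩ := exists_mk s₀
  obtain ⟨n₀, h₀⟩ := mk_mem_avoidFilter.1 (hS hs₀)
  have hlev : ∀ᶠ i in U, (y₀ i).level < i := by
    filter_upwards [h₀, Ultrafilter.eventually_gt_of_forall_ne_pure hU n₀] with i h₀ hi
    exact h₀.1.trans_lt hi
  obtain ⟨y, hy, hzy⟩ := exists_atoms_subset_union h haS hs₀ hlev
  obtain ⟨_, hn⟩ := mk_mem_avoidFilter.1 (hS hy)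
  refine mk_mem_avoidFilter.2 ⟨n₀ + 1, ?_⟩
  filter_upwards [h₀, hn, hzy, mk_le_mk.1 (h.1 hs₀)] with i h₀ hn hzy hle
  exact ⟨(Elt.level_le_level_add_one hle).trans (by omega), fun hg => (hzy hg).elim h₀.2 hn.2⟩

theorem isCompletePrimeFilter_avoidFilter (hU : ∀ i, U ≠ pure i) (g : ℕ → Fin 4) :
    IsCompletePrimeFilter (avoidFilter U g) :=
  ⟨isUpperSet_avoidFilter g, fun _ _ => isGLB_mem_avoidFilter hU g,
    fun _ _ => exists_mem_avoidFilter_of_isLUB g⟩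

theorem exists_avoidFilter_separating {a b : UProd U Elt} (ha : a ≤ pbar U) (hab : ¬ a ≤ b) :
    ∃ g, a ∈ avoidFilter U g ∧ b ∉ avoidFilter U g := by
  obtain ⟨x, rfl⟩ := exists_mk a
  obtain ⟨y, rfl⟩ := exists_mk b
  have hg : ∀ᶠ i in U, ∃ c, c ∈ (y i).atoms ∧ c ∉ (x i).atoms := by
    filter_upwards [mk_le_mk.1 ha, Ultrafilter.eventually_not.2 hab] with i hp hi
    exact Elt.exists_mem_atoms_not_mem hp hi
  obtain ⟨g, hg⟩ := Filter.skolem.1 hg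
  refine ⟨g, mk_mem_avoidFilter.2 ⟨1, ?_⟩, fun hb => ?_⟩
  · filter_upwards [mk_le_mk.1 ha, hg] with i hp hg using ⟨Elt.level_le_level_add_one hp, hg.2⟩
  · obtain ⟨n, hn⟩ := mk_mem_avoidFilter.1 hb
    exact (hg.and hn).exists.elim fun _ h => h.2.2 h.1.1

theorem exists_isCompletePrimeFilter_separating (hU : ∀ i, U ≠ pure i) {a b : UProd U Elt}
    (hab : ¬ a ≤ b) : ∃ F, IsCompletePrimeFilter F ∧ a ∈ F ∧ b ∉ F := by
  by_cases ha : a ≤ pbar U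
  · obtain ⟨g, hag, hbg⟩ := exists_avoidFilter_separating ha hab
    exact ⟨_, isCompletePrimeFilter_avoidFilter hU g, hag, hbg⟩
  · refine ⟨Set.Ici a, isCompletePrimeFilter_Ici fun T c h hac => ?_, Set.mem_Ici.2 le_rfl, hab⟩
    by_cases hcT : c ∈ T
    · exact ⟨c, hcT, hac⟩
    · exact absurd ((eq_pbar_of_isLUB_of_notMem h hcT).1 ▸ hac) ha

end Ultraproduct

theorem statement15_general (U : Ultrafilter ℕ) (hU : ∀ i : ℕ, U ≠ pure i)
    (m n : Cardinal.{0}) :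
    IsRepresentable m n (UProd U Elt) :=
  isRepresentable_of_separating m n fun _ _ => exists_isCompletePrimeFilter_separating hU

/-- For a non-principal ultrafilter `U` on `ω` and all cardinals `m, n`
with `3 ≤ m, n ≤ ω`, the ultraproduct `∏_U P_i` is `(m,n)`-representable. -/
theorem statement15 (U : Ultrafilter ℕ) (hU : ∀ i : ℕ, U ≠ pure i)
    (m n : Cardinal.{0}) (hm3 : 3 ≤ m) (hmω : m ≤ ℵ₀) (hn3 : 3 ≤ n) (hnω : n ≤ ℵ₀) :
    IsRepresentable m n (UProd U Elt) :=
  statement15_general U hU m n
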